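/- arXiv:2012.00292 — 2 statements merged into one kernel-verified Lean document; each statement's English description precedes it below -/
import Mathlib

section
/- Let x be a feasible half-integral Held–Karp solution on vertex set X, and let S ⊂ T ⊆ X with: x(e(u, T \ S)) ≤ 1 for every u ∈ S, x(δ(S)) = n, and x(δ(T)) = n − 1 for some number n. Then there exist distinct vertices u, v ∈ S and a path in the support of x from u to v all of whose internal vertices lie in T \ S. -/
open Finset

variable {V : Type*} [Fintype V] [DecidableEq V]

/-- Total x-weight of edges leaving `S` (each crossing edge counted once, from inside to outside). -/
def cutVal (x : V → V → ℝ) (S : Finset V) : ℝ := ∑ i ∈ S, ∑ j ∈ Sᶜ, x i j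

/-- Total x-weight of edges between disjoint sets `A` and `B`. -/
def eVal (x : V → V → ℝ) (A B : Finset V) : ℝ := ∑ i ∈ A, ∑ j ∈ B, x i j

/-- The support graph of an edge weighting. -/
def support (x : V → V → ℝ) : SimpleGraph V where
  Adj i j := i ≠ j ∧ (0 < x i j ∨ 0 < x j i)
  symm := ⟨fun i j h => ⟨h.1.symm, h.2.symm⟩⟩
  loopless := ⟨fun i h => h.1 rfl⟩

/-- The weight-1/2 edges of `x` decompose into the edge-disjoint triangles `𝒯`. -/
def TriDecomp (x : V → V → ℝ) (𝒯 : Finset (Finset V)) : Prop :=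
  (∀ tr ∈ 𝒯, tr.card = 3) ∧
  (∀ tr ∈ 𝒯, ∀ i ∈ tr, ∀ j ∈ tr, i ≠ j → x i j = 1 / 2) ∧
  (∀ i j : V, i ≠ j → x i j = 1 / 2 → ∃! tr, tr ∈ 𝒯 ∧ i ∈ tr ∧ j ∈ tr)

/-!
Suppose no two vertices of `S` are joined through `T \ S`. For `u ∈ S` let `B u` be the set of
vertices reachable from `u` by support walks whose other vertices lie in `T \ S`. These blobs are
pairwise disjoint, lie in `T`, and `x` vanishes from a blob to the rest of `T`. Hence `x(δ(S))`
is the sum of the `x(δ({u}))`, the union of the blobs has cut `∑ x(δ(B u))`, and that cut is at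
most `x(δ(T))`. Finally `x(δ(B u)) ≥ x(δ({u}))`: with `P = B u \ {u} ⊆ T \ S` one has
`x(δ(B u)) = x(δ({u})) + x(δ(P)) - 2 x(e(u, P))`, and `x(δ(P)) ≥ 2 ≥ 2 x(e(u, P))`.
So `x(δ(S)) ≤ x(δ(T))`, contradicting `x(δ(T)) = x(δ(S)) - 1`.
-/

open SimpleGraph

section Cut

variable {x : V → V → ℝ}

omit [Fintype V] [DecidableEq V] in
theorem eVal_comm (hsym : ∀ i j, x i j = x j i) (A B : Finset V) : eVal x B A = eVal x A B := by
  rw [eVal, eVal, sum_comm]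
  exact sum_congr rfl fun i _ => sum_congr rfl fun j _ => hsym j i

omit [Fintype V] [DecidableEq V] in
theorem eVal_mono_right (hx : ∀ i j, 0 ≤ x i j) (A : Finset V) {B C : Finset V} (h : B ⊆ C) :
    eVal x A B ≤ eVal x A C :=
  sum_le_sum fun i _ => sum_le_sum_of_subset_of_nonneg h fun j _ _ => hx i j

theorem cutVal_union {A B : Finset V} (h : Disjoint A B) :
    cutVal x (A ∪ B) = cutVal x A + cutVal x B - eVal x A B - eVal x B A := by
  have hsplit : ∀ {C D : Finset V}, Disjoint C D →
      ∀ i, ∑ j ∈ Cᶜ, x i j = ∑ j ∈ (C ∪ D)ᶜ, x i j + ∑ j ∈ D, x i j :=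
    fun {C D} hCD i => by
    rw [← sum_sdiff (subset_compl_iff_disjoint_left.mpr hCD), compl_union,
      sdiff_eq_inter_compl]
  simp only [cutVal, eVal, sum_union h, hsplit h, hsplit h.symm, union_comm B A,
    sum_add_distrib]
  ring

theorem cutVal_le_cutVal_union (hsym : ∀ i j, x i j = x j i) {A B : Finset V} (h : Disjoint A B)
    (hB : 2 ≤ cutVal x B) (hAB : eVal x A B ≤ 1) : cutVal x A ≤ cutVal x (A ∪ B) := by
  rw [cutVal_union h, eVal_comm hsym A B]
  linarith

theorem cutVal_singleton_le (hsym : ∀ i j, x i j = x j i) (hx : ∀ i j, 0 ≤ x i j)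
    (hsub : ∀ A : Finset V, A.Nonempty → A ≠ Finset.univ → 2 ≤ cutVal x A)
    {u : V} {R C : Finset V} (hu : u ∈ R) (hRC : R.erase u ⊆ C) (hC : eVal x {u} C ≤ 1) :
    cutVal x {u} ≤ cutVal x R := by
  rw [← insert_erase hu, insert_eq]
  rcases (R.erase u).eq_empty_or_nonempty with hP | hP
  · rw [hP, union_empty]
  · have huP : u ∉ R.erase u := notMem_erase u R
    exact cutVal_le_cutVal_union hsym (disjoint_singleton_left.mpr huP)
      (hsub _ hP fun h => huP (h ▸ mem_univ u))
      ((eVal_mono_right hx {u} hRC).trans hC)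

theorem cutVal_eq_sum_compl_of_separated {A U : Finset V} (hAU : A ⊆ U)
    (hsep : ∀ i ∈ A, ∀ j ∈ U \ A, x i j = 0) :
    cutVal x A = ∑ i ∈ A, ∑ j ∈ Uᶜ, x i j := by
  refine sum_congr rfl fun i hi =>
    (sum_subset (compl_subset_compl.mpr hAU) fun j hjA hjU => ?_).symm
  simp only [mem_compl, not_not] at hjA hjU
  exact hsep i hi j (mem_sdiff.mpr ⟨hjU, hjA⟩)

theorem cutVal_biUnion {ι : Type*} {s : Finset ι} {B : ι → Finset V}
    (hB : (s : Set ι).PairwiseDisjoint B)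
    (hsep : ∀ a ∈ s, ∀ i ∈ B a, ∀ j ∈ s.biUnion B \ B a, x i j = 0) :
    cutVal x (s.biUnion B) = ∑ a ∈ s, cutVal x (B a) := by
  rw [cutVal, sum_biUnion hB]
  exact sum_congr rfl fun a ha =>
    (cutVal_eq_sum_compl_of_separated (subset_biUnion_of_mem B ha) (hsep a ha)).symm

theorem cutVal_eq_sum_cutVal_singleton {S : Finset V}
    (hS : ∀ u ∈ S, ∀ v ∈ S, u ≠ v → x u v = 0) :
    cutVal x S = ∑ u ∈ S, cutVal x {u} := by
  conv_lhs => rw [← biUnion_singleton_eq_self (s := S)]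
  refine cutVal_biUnion (fun u _ v _ huv => disjoint_singleton.mpr huv) fun u hu i hi j hj => ?_
  rw [biUnion_singleton_eq_self, mem_sdiff, notMem_singleton] at hj
  rw [mem_singleton.mp hi]
  exact hS u hu j hj.1 (Ne.symm hj.2)

theorem cutVal_le_of_separated (hx : ∀ i j, 0 ≤ x i j) {U T : Finset V} (hUT : U ⊆ T)
    (hsep : ∀ i ∈ U, ∀ j ∈ T \ U, x i j = 0) : cutVal x U ≤ cutVal x T := by
  rw [cutVal_eq_sum_compl_of_separated hUT hsep, cutVal]
  exact sum_le_sum_of_subset_of_nonneg hUT fun i _ _ => sum_nonneg fun j _ => hx i j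

end Cut

section Reach

omit [Fintype V] [DecidableEq V]

variable {G : SimpleGraph V} {A : Finset V} {u v w : V}

def LinkedVia (G : SimpleGraph V) (A : Finset V) (u v : V) : Prop :=
  ∃ p : G.Walk u v, ∀ z ∈ p.support, z = u ∨ z = v ∨ z ∈ A

def reachVia (G : SimpleGraph V) (A : Finset V) (u : V) : Set V :=
  {w | ∃ p : G.Walk u w, ∀ z ∈ p.support, z = u ∨ z ∈ A}

theorem LinkedVia.exists_isPath [DecidableEq V] (h : LinkedVia G A u v) :
    ∃ p : G.Walk u v, p.IsPath ∧ ∀ w ∈ p.support, w ≠ u → w ≠ v → w ∈ A := by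
  obtain ⟨p, hp⟩ := h
  refine ⟨p.bypass, p.bypass_isPath, fun w hw hwu hwv => ?_⟩
  simpa [hwu, hwv] using hp w (p.support_bypass_subset_support hw)

theorem self_mem_reachVia : u ∈ reachVia G A u :=
  ⟨.nil, by simp⟩

theorem eq_or_mem_of_mem_reachVia (h : w ∈ reachVia G A u) : w = u ∨ w ∈ A :=
  h.elim fun p hp => hp w p.end_mem_support

theorem mem_reachVia_of_adj (hw : w ∈ reachVia G A u) (hadj : G.Adj w v) (hv : v ∈ A) :
    v ∈ reachVia G A u := by
  obtain ⟨p, hp⟩ := hw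
  refine ⟨p.concat hadj, fun z hz => ?_⟩
  rw [Walk.support_concat, List.mem_append, List.mem_singleton] at hz
  rcases hz with hz | rfl
  exacts [hp z hz, Or.inr hv]

theorem linkedVia_of_adj (hw : w ∈ reachVia G A u) (hadj : G.Adj w v) : LinkedVia G A u v := by
  obtain ⟨p, hp⟩ := hw
  refine ⟨p.concat hadj, fun z hz => ?_⟩
  rw [Walk.support_concat, List.mem_append, List.mem_singleton] at hz
  rcases hz with hz | rfl
  · exact (hp z hz).elim Or.inl (Or.inr ∘ Or.inr)
  · exact Or.inr (Or.inl rfl)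

theorem linkedVia_of_mem_reachVia (hu : w ∈ reachVia G A u) (hv : w ∈ reachVia G A v) :
    LinkedVia G A u v := by
  obtain ⟨p, hp⟩ := hu
  obtain ⟨q, hq⟩ := hv
  refine ⟨p.append q.reverse, fun z hz => ?_⟩
  rw [Walk.mem_support_append_iff, Walk.support_reverse, List.mem_reverse] at hz
  rcases hz with hz | hz
  · exact (hp z hz).elim Or.inl (Or.inr ∘ Or.inr)
  · exact (hq z hz).elim (Or.inr ∘ Or.inl) (Or.inr ∘ Or.inr)

end Reach

section Blob

variable {x : V → V → ℝ} {S T : Finset V} {u i j : V}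

omit [Fintype V] in
theorem eq_zero_of_mem_reachVia (hx : ∀ i j, 0 ≤ x i j)
    (hno : ∀ v ∈ S, u ≠ v → ¬ LinkedVia (support x) (T \ S) u v)
    (hi : i ∈ reachVia (support x) (T \ S) u) (hj : j ∈ T)
    (hj' : j ∉ reachVia (support x) (T \ S) u) : x i j = 0 := by
  by_contra hne
  have hadj : (support x).Adj i j := ⟨fun h => hj' (h ▸ hi), Or.inl ((hx i j).lt_of_ne' hne)⟩
  by_cases hjS : j ∈ S
  · exact hno j hjS (fun h => hj' (h ▸ self_mem_reachVia)) (linkedVia_of_adj hi hadj)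
  · exact hj' (mem_reachVia_of_adj hi hadj (mem_sdiff.mpr ⟨hj, hjS⟩))

theorem cutVal_le_of_not_linkedVia (hsym : ∀ i j, x i j = x j i) (hx : ∀ i j, 0 ≤ x i j)
    (hsub : ∀ A : Finset V, A.Nonempty → A ≠ Finset.univ → 2 ≤ cutVal x A) (hST : S ⊆ T)
    (hout : ∀ u ∈ S, eVal x {u} (T \ S) ≤ 1)
    (hno : ∀ u ∈ S, ∀ v ∈ S, u ≠ v → ¬ LinkedVia (support x) (T \ S) u v) :
    cutVal x S ≤ cutVal x T := by
  classical
  set B : V → Finset V := fun u => (reachVia (support x) (T \ S) u).toFinset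
  have hBT : ∀ u ∈ S, B u ⊆ T := fun u hu w hw =>
    (eq_or_mem_of_mem_reachVia (Set.mem_toFinset.mp hw)).elim (· ▸ hST hu) (mem_sdiff.mp · |>.1)
  have hBS : ∀ u ∈ S, ∀ v ∈ S, v ∈ B u → v = u := fun u _ v hv hvu =>
    (eq_or_mem_of_mem_reachVia (Set.mem_toFinset.mp hvu)).resolve_right
      fun h => (mem_sdiff.mp h).2 hv
  have hzero : ∀ u ∈ S, ∀ i ∈ B u, ∀ j ∈ T \ B u, x i j = 0 := fun u hu i hi j hj => by
    simp only [B, mem_sdiff, Set.mem_toFinset] at hi hj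
    exact eq_zero_of_mem_reachVia hx (hno u hu) hi hj.1 hj.2
  have hdisj : (S : Set V).PairwiseDisjoint B := fun u hu v hv huv =>
    disjoint_left.mpr fun w hwu hwv => hno u hu v hv huv
      (linkedVia_of_mem_reachVia (Set.mem_toFinset.mp hwu) (Set.mem_toFinset.mp hwv))
  have hself : ∀ u, u ∈ B u := fun u => Set.mem_toFinset.mpr self_mem_reachVia
  calc cutVal x S = ∑ u ∈ S, cutVal x {u} :=
        cutVal_eq_sum_cutVal_singleton fun u hu v hv huv => hzero u hu u (hself u) v
          (mem_sdiff.mpr ⟨hST hv, fun h => huv (hBS u hu v hv h).symm⟩)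
    _ ≤ ∑ u ∈ S, cutVal x (B u) := sum_le_sum fun u hu =>
        cutVal_singleton_le hsym hx hsub (hself u) (fun w hw => by
          obtain ⟨hwu, hw⟩ := mem_erase.mp hw
          exact (eq_or_mem_of_mem_reachVia (Set.mem_toFinset.mp hw)).resolve_left hwu)
          (hout u hu)
    _ = cutVal x (S.biUnion B) := (cutVal_biUnion hdisj fun u hu i hi j hj =>
        hzero u hu i hi j (sdiff_subset_sdiff (biUnion_subset.mpr hBT) le_rfl hj)).symm
    _ ≤ cutVal x T := cutVal_le_of_separated hx (biUnion_subset.mpr hBT) fun i hi j hj => by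
        obtain ⟨u, hu, hiu⟩ := mem_biUnion.mp hi
        obtain ⟨hjT, hjB⟩ := mem_sdiff.mp hj
        exact hzero u hu i hiu j
          (mem_sdiff.mpr ⟨hjT, fun h => hjB (mem_biUnion.mpr ⟨u, hu, h⟩)⟩)

end Blob

theorem cycle_lemma_general
    (x : V → V → ℝ)
    (hsym : ∀ i j, x i j = x j i)
    (hrange : ∀ i j, 0 ≤ x i j ∧ x i j ≤ 1)
    (hsub : ∀ A : Finset V, A.Nonempty → A ≠ Finset.univ → 2 ≤ cutVal x A)
    (S T : Finset V) (hST : S ⊂ T)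
    (hout : ∀ u ∈ S, eVal x {u} (T \ S) ≤ 1)
    (n : ℝ) (hS : cutVal x S = n) (hT : cutVal x T = n - 1) :
    ∃ u ∈ S, ∃ v ∈ S, u ≠ v ∧
      ∃ p : (support x).Walk u v, p.IsPath ∧
        ∀ w ∈ p.support, w ≠ u → w ≠ v → w ∈ T \ S := by
  by_contra hcon
  have hno : ∀ u ∈ S, ∀ v ∈ S, u ≠ v → ¬ LinkedVia (support x) (T \ S) u v :=
    fun u hu v hv huv h => hcon ⟨u, hu, v, hv, huv, h.exists_isPath⟩
  have := cutVal_le_of_not_linkedVia hsym (fun i j => (hrange i j).1) hsub hST.subset hout hno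
  linarith

/-- The cycle lemma: if $S ⊂ T$, every vertex of $S$ sends weight at most 1 into $T \setminus S$,
and $x(δ(T)) = x(δ(S)) - 1$, then two vertices of $S$ are joined by a path of the support of $x$
whose internal vertices all lie in $T \setminus S$. -/
theorem cycle_lemma
    (x : V → V → ℝ)
    (hsym : ∀ i j, x i j = x j i)
    (hdiag : ∀ i, x i i = 0)
    (hrange : ∀ i j, 0 ≤ x i j ∧ x i j ≤ 1)
    (hdeg : ∀ i : V, ∑ j, x i j = 2)
    (hsub : ∀ A : Finset V, A.Nonempty → A ≠ Finset.univ → 2 ≤ cutVal x A)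
    (S T : Finset V) (hST : S ⊂ T)
    (hout : ∀ u ∈ S, eVal x {u} (T \ S) ≤ 1)
    (n : ℝ) (hS : cutVal x S = n) (hT : cutVal x T = n - 1) :
    ∃ u ∈ S, ∃ v ∈ S, u ≠ v ∧
      ∃ p : (support x).Walk u v, p.IsPath ∧
        ∀ w ∈ p.support, w ≠ u → w ≠ v → w ∈ T \ S :=
  cycle_lemma_general x hsym hrange hsub S T hST hout n hS hT
end

section
/- Let x be a feasible Held–Karp solution (degree-2 constraints and subtour elimination) and let H, T₁,…,T_t be a comb with t odd whose comb inequality is violated: x(δ(H)) + Σᵢ x(δ(Tᵢ)) < 3t + 1. Then at most one tooth Tᵢ has x(δ(Tᵢ)) > 2; more precisely Σᵢ (x(δ(Tᵢ)) − 2) < 2. -/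
/-! Splitting each tooth `T` into `T ∩ H` and `T \ H`, the subtour constraints on the two
parts give `x(δ(T)) + 2 x(T ∩ H, T \ H) ≥ 4`. The edges between the two parts of the teeth
all cross `δ(H)`, so `2 x(δ(H)) ≥ ∑ᵢ (4 - x(δ(Tᵢ)))`; adding twice the violated comb
inequality leaves `∑ᵢ x(δ(Tᵢ)) < 2t + 2`. -/

open Finset

variable {V : Type*} [Fintype V] [DecidableEq V]

lemma ne_univ_of_disjoint_of_nonempty {α : Type*} [Fintype α] {A B : Finset α}
    (h : Disjoint A B) (hB : B.Nonempty) : A ≠ univ := by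
  rintro rfl
  obtain ⟨b, hb⟩ := hB
  exact disjoint_right.mp h hb (mem_univ b)

lemma eVal_mono {α : Type*} (x : α → α → ℝ) (hx : ∀ i j, 0 ≤ x i j)
    {A B C D : Finset α} (hAC : A ⊆ C) (hBD : B ⊆ D) :
    eVal x A B ≤ eVal x C D :=
  (sum_le_sum fun i _ => sum_le_sum_of_subset_of_nonneg hBD fun j _ _ => hx i j).trans
    (sum_le_sum_of_subset_of_nonneg hAC fun i _ _ => sum_nonneg fun j _ => hx i j)

section

variable (x : V → V → ℝ)

lemma sum_compl_eq_sum_compl_union_add_sum {A B : Finset V} (h : Disjoint A B) (i : V) :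
    ∑ j ∈ Aᶜ, x i j = ∑ j ∈ (A ∪ B)ᶜ, x i j + ∑ j ∈ B, x i j := by
  rw [← sum_sdiff (subset_compl_iff_disjoint_left.mpr h), compl_union, sdiff_eq_inter_compl]

lemma cutVal_add_cutVal_of_disjoint (hsym : ∀ i j, x i j = x j i) {A B : Finset V}
    (h : Disjoint A B) :
    cutVal x A + cutVal x B = cutVal x (A ∪ B) + 2 * eVal x A B := by
  have hBA : ∑ i ∈ B, ∑ j ∈ A, x i j = ∑ i ∈ A, ∑ j ∈ B, x i j := by
    rw [sum_comm]
    exact sum_congr rfl fun i _ => sum_congr rfl fun j _ => hsym j i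
  simp only [cutVal, eVal, sum_union h, sum_compl_eq_sum_compl_union_add_sum x h,
    sum_compl_eq_sum_compl_union_add_sum x h.symm, union_comm B A, sum_add_distrib, hBA]
  ring

lemma four_le_cutVal_union_add_eVal (hsym : ∀ i j, x i j = x j i)
    (hsub : ∀ S : Finset V, S.Nonempty → S ≠ univ → 2 ≤ cutVal x S)
    {A B : Finset V} (h : Disjoint A B) (hA : A.Nonempty) (hB : B.Nonempty) :
    4 ≤ cutVal x (A ∪ B) + 2 * eVal x A B := by
  have hA' : 2 ≤ cutVal x A := hsub A hA (ne_univ_of_disjoint_of_nonempty h hB)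
  have hB' : 2 ≤ cutVal x B := hsub B hB (ne_univ_of_disjoint_of_nonempty h.symm hA)
  linarith [cutVal_add_cutVal_of_disjoint x hsym h]

lemma sum_eVal_le_cutVal {ι : Type*} (hx : ∀ i j, 0 ≤ x i j) (H : Finset V) (s : Finset ι)
    (A B : ι → Finset V) (hdisj : (s : Set ι).PairwiseDisjoint A) (hA : ∀ i ∈ s, A i ⊆ H)
    (hB : ∀ i ∈ s, B i ⊆ Hᶜ) :
    ∑ i ∈ s, eVal x (A i) (B i) ≤ cutVal x H := by
  classical
  calc ∑ i ∈ s, eVal x (A i) (B i) ≤ ∑ i ∈ s, eVal x (A i) Hᶜ :=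
        sum_le_sum fun i hi => eVal_mono x hx subset_rfl (hB i hi)
    _ = eVal x (s.biUnion A) Hᶜ := (sum_biUnion hdisj).symm
    _ ≤ eVal x H Hᶜ := eVal_mono x hx (biUnion_subset.mpr hA) subset_rfl

end

theorem violated_comb_teeth_excess_general
    (x : V → V → ℝ)
    (hsym : ∀ i j, x i j = x j i)
    (hrange : ∀ i j, 0 ≤ x i j ∧ x i j ≤ 1)
    (hsub : ∀ S : Finset V, S.Nonempty → S ≠ Finset.univ → 2 ≤ cutVal x S)
    (H : Finset V) (t : ℕ) (T : Fin t → Finset V)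
    (hdisj : ∀ i j, i ≠ j → Disjoint (T i) (T j))
    (hteeth : ∀ i, ((T i) ∩ H).Nonempty ∧ ((T i) \ H).Nonempty)
    (hviol : cutVal x H + ∑ i, cutVal x (T i) < 3 * (t : ℝ) + 1) :
    ∑ i, (cutVal x (T i) - 2) < 2 := by
  have htooth : ∀ i, 4 ≤ cutVal x (T i) + 2 * eVal x (T i ∩ H) (T i \ H) := fun i => by
    have := four_le_cutVal_union_add_eVal x hsym hsub (disjoint_sdiff_inter (T i) H).symm
      (hteeth i).1 (hteeth i).2
    rwa [union_comm, sdiff_union_inter] at this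
  have hhandle : ∑ i, eVal x (T i ∩ H) (T i \ H) ≤ cutVal x H :=
    sum_eVal_le_cutVal x (fun i j => (hrange i j).1) H univ _ _
      (fun i _ j _ hij => (hdisj i j hij).mono inter_subset_left inter_subset_left)
      (fun i _ => inter_subset_right) (fun i _ v hv => mem_compl.mpr (mem_sdiff.mp hv).2)
  have hteeth_sum := sum_le_sum fun i (_ : i ∈ univ) => htooth i
  simp only [sum_add_distrib, sum_sub_distrib, sum_const, card_univ, Fintype.card_fin,
    nsmul_eq_mul, ← mul_sum] at hteeth_sum ⊢
  linarith

/-- In a violated comb, the total excess of teeth boundaries over 2 is less than 2; in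
particular at most one tooth has boundary weight exceeding 2. -/
theorem violated_comb_teeth_excess
    (x : V → V → ℝ)
    (hsym : ∀ i j, x i j = x j i)
    (hdiag : ∀ i, x i i = 0)
    (hrange : ∀ i j, 0 ≤ x i j ∧ x i j ≤ 1)
    (hdeg : ∀ i : V, ∑ j, x i j = 2)
    (hsub : ∀ S : Finset V, S.Nonempty → S ≠ Finset.univ → 2 ≤ cutVal x S)
    (H : Finset V) (t : ℕ) (ht : Odd t) (T : Fin t → Finset V)
    (hdisj : ∀ i j, i ≠ j → Disjoint (T i) (T j))
    (hteeth : ∀ i, ((T i) ∩ H).Nonempty ∧ ((T i) \ H).Nonempty)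
    (hviol : cutVal x H + ∑ i, cutVal x (T i) < 3 * (t : ℝ) + 1) :
    ∑ i, (cutVal x (T i) - 2) < 2 :=
  violated_comb_teeth_excess_general x hsym hrange hsub H t T hdisj hteeth hviol
end
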